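/- Assume N ≥ 2, α ∈ (0,2), and assumptions (A_ν). Then the projected measure μ̃ on S^{N-2} satisfies: (1) (finiteness) μ̃(S^{N-2}) = ∫_{S^{N-1}_*} (1 − σ_N²)^{α/2} dμ(σ) ≤ μ(S^{N-1}); (2) (nondegeneracy) for every ξ' in the unit sphere S^{N-2} ⊂ ℝ^{N-1}, ∫_{S^{N-2}} |ξ'·σ'|^α dμ̃(σ') = ∫_{S^{N-1}_*} |ξ'·σ'|^α dμ(σ', σ_N) ≥ Λ₁. -/

import Mathlib

open MeasureTheory Set Filter Topology
open scoped RealInnerProductSpace ENNReal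

noncomputable section

/-- Euclidean space `ℝ^N`. -/
abbrev Euc (N : ℕ) : Type := EuclideanSpace ℝ (Fin N)

/-- The `i`-th coordinate unit vector of `ℝ^N`. -/
def eVec (N : ℕ) (i : Fin N) : Euc N := EuclideanSpace.single i 1

/-- Zero out the `i`-th coordinate of a vector. -/
def projC {N : ℕ} (i : Fin N) (θ : Euc N) : Euc N := θ - θ i • eVec N i

/-- Rescaled jump direction `θ' + λ^σ θ_i e_i`. -/
def shiftVec {N : ℕ} (i : Fin N) (σ lam : ℝ) (θ : Euc N) : Euc N :=
  projC i θ + (lam ^ σ * θ i) • eVec N i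

/-- Generic anisotropic Lévy operator, with jump directions transformed by `T` and
radial integration restricted to the set `s ⊆ (0,∞)`. -/
def opLT {N : ℕ} (μ : Measure (Euc N)) (α : ℝ) (s : Set ℝ) (T : Euc N → Euc N)
    (φ : Euc N → ℝ) (x : Euc N) : ℝ :=
  ∫ θ, (∫ r in s, (φ x - (φ (x + r • T θ) + φ (x - r • T θ)) / 2) / r ^ (1 + α)) ∂μ

/-- Absolute convergence (in iterated form) of the integral defining the operator. -/
def absConv {N : ℕ} (μ : Measure (Euc N)) (α : ℝ) (s : Set ℝ) (T : Euc N → Euc N)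
    (φ : Euc N → ℝ) (x : Euc N) : Prop :=
  (∀ᵐ θ ∂μ, IntegrableOn
      (fun r => (φ x - (φ (x + r • T θ) + φ (x - r • T θ)) / 2) / r ^ (1 + α)) s volume) ∧
    Integrable
      (fun θ => ∫ r in s, |(φ x - (φ (x + r • T θ) + φ (x - r • T θ)) / 2) / r ^ (1 + α)|) μ

/-- Assumptions `(A_ν)` on the spectral measure `μ`, with nondegeneracy constant `lam1`
and total mass `lam2`. -/
def Anu {N : ℕ} (μ : Measure (Euc N)) (α lam1 lam2 : ℝ) : Prop :=
  μ (Metric.sphere (0 : Euc N) 1)ᶜ = 0 ∧ μ Set.univ = ENNReal.ofReal lam2 ∧ 0 < lam1 ∧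
    ∀ ξ ∈ Metric.sphere (0 : Euc N) 1, lam1 ≤ ∫ θ, |⟪ξ, θ⟫| ^ α ∂μ

/-- Convection nonlinearity `F(r) = |r|^{q-1} r`. -/
def Fc (q r : ℝ) : ℝ := |r| ^ (q - 1) * r

/-- Laplacian as the sum of second directional derivatives along the coordinate axes. -/
def lapl {N : ℕ} (φ : Euc N → ℝ) (x : Euc N) : ℝ :=
  ∑ j : Fin N, fderiv ℝ (fun y => fderiv ℝ φ y (eVec N j)) x (eVec N j)

/-- Regularity class (i) in the definition of entropy solutions:
`u ∈ L^∞((0,∞);L¹(ℝ^N)) ∩ L^∞_loc((0,∞);L^∞(ℝ^N))`. -/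
def regQ {N : ℕ} (u : ℝ → Euc N → ℝ) : Prop :=
  (∃ C : ℝ, ∀ t ∈ Ioi (0:ℝ), Integrable (u t) ∧ (∫ x, |u t x|) ≤ C) ∧
    ∀ τ T : ℝ, 0 < τ → τ < T →
      ∃ C : ℝ, ∀ t ∈ Ioc τ T, ∀ᵐ x ∂(volume : Measure (Euc N)), |u t x| ≤ C

/-- Entropy inequality (ii) in the definition of entropy solutions, for the operator with
direction transform `T` and convection in the `i`-th coordinate direction. -/
def entropyIneqT {N : ℕ} (μ : Measure (Euc N)) (α : ℝ) (T : Euc N → Euc N) (q : ℝ)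
    (i : Fin N) (u : ℝ → Euc N → ℝ) : Prop :=
  ∀ k : ℝ, ∀ ρ > (0:ℝ), ∀ φ : ℝ × Euc N → ℝ,
    ContDiff ℝ (⊤ : ℕ∞) φ → HasCompactSupport φ → 0 ≤ φ →
    tsupport φ ⊆ Ioi (0:ℝ) ×ˢ (Set.univ : Set (Euc N)) →
      0 ≤ (∫ t in Ioi (0:ℝ), ∫ x,
              (|u t x - k| * fderiv ℝ φ (t, x) (1, 0)
                + Real.sign (u t x - k) * (Fc q (u t x) - Fc q k) *
                    fderiv ℝ φ (t, x) (0, eVec N i)))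
          - ∫ t in Ioi (0:ℝ), ∫ x,
              (Real.sign (u t x - k) * φ (t, x) * opLT μ α (Ioi ρ) T (u t) x
                + |u t x - k| * opLT μ α (Ioc 0 ρ) T (fun y => φ (t, y)) x)

/-- The initial datum `μ₀` is attained in the essential-limit sense, tested against
bounded continuous functions. -/
def initTrace {N : ℕ} (μ₀ : Measure (Euc N)) (u : ℝ → Euc N → ℝ) : Prop :=
  ∀ ψ : Euc N → ℝ, Continuous ψ → (∃ C : ℝ, ∀ x, |ψ x| ≤ C) →
    ∃ S : Set ℝ, volume S = 0 ∧
      Tendsto (fun t => ∫ x, u t x * ψ x) (𝓝[Ioi (0:ℝ) \ S] (0:ℝ)) (𝓝 (∫ x, ψ x ∂μ₀))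

/-- Entropy solution of `∂_t u + L_T u + ∂_{x_i}(F(u)) = 0` in `Q = (0,∞) × ℝ^N`
with initial datum the finite measure `μ₀`. -/
def IsEntropySolT {N : ℕ} (μ : Measure (Euc N)) (α : ℝ) (T : Euc N → Euc N) (q : ℝ)
    (i : Fin N) (μ₀ : Measure (Euc N)) (u : ℝ → Euc N → ℝ) : Prop :=
  regQ u ∧ entropyIneqT μ α T q i u ∧ initTrace μ₀ u

/-- Very weak fundamental solution with mass `M` of `∂_t U + L U = 0`. -/
def IsVWFundSol {N : ℕ} (μ : Measure (Euc N)) (α M : ℝ) (U : ℝ → Euc N → ℝ) : Prop :=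
  (∀ τ T : ℝ, 0 < τ → τ < T →
      IntegrableOn (fun p : ℝ × Euc N => U p.1 p.2 * (1 + ‖p.2‖) ^ (-(1 + α)))
        (Ioc τ T ×ˢ (Set.univ : Set (Euc N))) volume) ∧
    ∀ φ : ℝ × Euc N → ℝ, ContDiff ℝ (⊤ : ℕ∞) φ → HasCompactSupport φ →
      (∫ t in Ioi (0:ℝ), ∫ x, U t x *
          (fderiv ℝ φ (t, x) (1, 0) - opLT μ α (Ioi 0) id (fun y => φ (t, y)) x))
        + M * φ (0, 0) = 0

/-- Regularity class for entropy solutions of the regularized problem: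
`L^∞((0,∞);L¹_loc) ∩ L^∞_loc((0,∞);L^∞) ∩ L²_loc((0,∞);H¹_loc)`. -/
def regQeps {N : ℕ} (u : ℝ → Euc N → ℝ) : Prop :=
  (∀ R > (0:ℝ), ∃ C : ℝ, ∀ t ∈ Ioi (0:ℝ), (∫ x in Metric.ball (0 : Euc N) R, |u t x|) ≤ C) ∧
    (∀ τ T : ℝ, 0 < τ → τ < T →
      ∃ C : ℝ, ∀ t ∈ Ioc τ T, ∀ᵐ x ∂(volume : Measure (Euc N)), |u t x| ≤ C) ∧
    ∀ τ T : ℝ, 0 < τ → τ < T → ∀ R > (0:ℝ),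
      (∀ t ∈ Ioc τ T, ∀ᵐ x ∂(volume : Measure (Euc N)), DifferentiableAt ℝ (u t) x) ∧
        IntegrableOn (fun p : ℝ × Euc N => (u p.1 p.2) ^ 2 + ‖gradient (u p.1) p.2‖ ^ 2)
          (Ioc τ T ×ˢ Metric.ball (0 : Euc N) R) volume

/-- Entropy inequality for the regularized problem `∂_t u + L u + ∂_{x_i}(F(u)) = ε Δu`
with `L¹ ∩ L^∞` initial datum `u₀`. -/
def entropyIneqReg {N : ℕ} (μ : Measure (Euc N)) (α ε q : ℝ) (i : Fin N)
    (u₀ : Euc N → ℝ) (u : ℝ → Euc N → ℝ) : Prop :=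
  ∀ k : ℝ, ∀ ρ > (0:ℝ), ∀ φ : ℝ × Euc N → ℝ,
    ContDiff ℝ (⊤ : ℕ∞) φ → HasCompactSupport φ → 0 ≤ φ →
      0 ≤ (∫ t in Ioi (0:ℝ), ∫ x,
              (|u t x - k| * fderiv ℝ φ (t, x) (1, 0)
                + Real.sign (u t x - k) * (Fc q (u t x) - Fc q k) *
                    fderiv ℝ φ (t, x) (0, eVec N i)
                + ε * |u t x - k| * lapl (fun y => φ (t, y)) x))
          - (∫ t in Ioi (0:ℝ), ∫ x,
              (Real.sign (u t x - k) * φ (t, x) * opLT μ α (Ioi ρ) id (u t) x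
                + |u t x - k| * opLT μ α (Ioc 0 ρ) id (fun y => φ (t, y)) x))
          + ∫ x, |u₀ x - k| * φ (0, x)

/-- Entropy solution of the regularized problem. -/
def IsEntropySolReg {N : ℕ} (μ : Measure (Euc N)) (α ε q : ℝ) (i : Fin N)
    (u₀ : Euc N → ℝ) (u : ℝ → Euc N → ℝ) : Prop :=
  regQeps u ∧ entropyIneqReg μ α ε q i u₀ u

/-- `C_b^∞` smoothness on `Q = (0,∞) × ℝ^N`: smooth with all derivatives bounded. -/
def CbSmoothQ {N : ℕ} (u : ℝ → Euc N → ℝ) : Prop :=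
  ContDiffOn ℝ (⊤ : ℕ∞) (fun p : ℝ × Euc N => u p.1 p.2)
      (Ioi (0:ℝ) ×ˢ (Set.univ : Set (Euc N))) ∧
    ∀ n : ℕ, ∃ C : ℝ, ∀ p ∈ Ioi (0:ℝ) ×ˢ (Set.univ : Set (Euc N)),
      ‖iteratedFDerivWithin ℝ n (fun p : ℝ × Euc N => u p.1 p.2)
          (Ioi (0:ℝ) ×ˢ (Set.univ : Set (Euc N))) p‖ ≤ C

/-- Pointwise (classical) solution of `∂_t u + L u + ∂_{x_i}(u^q) = ε Δu` on `Q`,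
the nonlocal term being given by an absolutely convergent integral. -/
def IsClassicalSolReg {N : ℕ} (μ : Measure (Euc N)) (α ε q : ℝ) (i : Fin N)
    (u : ℝ → Euc N → ℝ) : Prop :=
  ∀ t ∈ Ioi (0:ℝ), ∀ x : Euc N,
    absConv μ α (Ioi 0) id (u t) x ∧
      deriv (fun s => u s x) t + opLT μ α (Ioi 0) id (u t) x
          + fderiv ℝ (fun y => u t y ^ q) x (eVec N i) = ε * lapl (u t) x

/-- Continuity `[0,∞) → L^p_loc(ℝ^N)`. -/
def ContLploc {N : ℕ} (p : ℝ) (u : ℝ → Euc N → ℝ) : Prop :=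
  ∀ R > (0:ℝ), ∀ t₀ ∈ Ici (0:ℝ),
    Tendsto (fun t => ∫ x in Metric.ball (0 : Euc N) R, |u t x - u t₀ x| ^ p)
      (𝓝[Ici (0:ℝ)] t₀) (𝓝 0)

/-- Fourier transform with the convention `ĝ(ξ) = ∫ e^{-i x·ξ} g(x) dx`. -/
def ftc {N : ℕ} (g : Euc N → ℝ) (ξ : Euc N) : ℂ :=
  ∫ x, Complex.exp (-(Complex.I) * ((⟪x, ξ⟫ : ℝ) : ℂ)) * (g x : ℂ)

/-- `C_α = ∫_0^∞ (1 - cos t) t^{-1-α} dt`. -/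
def Calpha (α : ℝ) : ℝ := ∫ t in Ioi (0:ℝ), (1 - Real.cos t) / t ^ (1 + α)

/-- `c_{≤,α}(s) = ∫_0^s (1 - cos t) t^{-1-α} dt`. -/
def cLe (α s : ℝ) : ℝ := ∫ t in Ioc (0:ℝ) s, (1 - Real.cos t) / t ^ (1 + α)

/-- `∫ |(-Δ)^{a/2} f|²`, encoded through the Fourier transform
(with Mathlib's `e^{-2πi x·ξ}` convention, so that `(-Δ)` has symbol `(2π|ξ|)²`). -/
def fracL2sq {N : ℕ} (a : ℝ) (f : Euc N → ℝ) : ℝ :=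
  ∫ ξ : Euc N, (2 * Real.pi * ‖ξ‖) ^ (2 * a) *
    ‖FourierTransform.fourier (fun x => (f x : ℂ)) ξ‖ ^ 2

/-- Append a last coordinate: `(x', s) ∈ ℝ^{n+1}`. -/
def snocE {n : ℕ} (x : Euc n) (s : ℝ) : Euc (n + 1) :=
  (EuclideanSpace.equiv (Fin (n + 1)) ℝ).symm (Fin.snoc ((EuclideanSpace.equiv (Fin n) ℝ) x) s)

/-- Drop the last coordinate: `x ∈ ℝ^{n+1} ↦ x' ∈ ℝ^n`. -/
def dropE {n : ℕ} (x : Euc (n + 1)) : Euc n :=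
  (EuclideanSpace.equiv (Fin n) ℝ).symm fun j => x j.castSucc

/-- The projection `T(σ', σ_N) = σ'/(1-σ_N²)^{1/2}` from `S^{N-1}_*` to `S^{N-2}`. -/
def Tproj (n : ℕ) (σ : Euc (n + 1)) : Euc n :=
  (EuclideanSpace.equiv (Fin n) ℝ).symm
    fun j => σ j.castSucc / Real.sqrt (1 - (σ (Fin.last n)) ^ 2)

/-- The projected spectral measure `μ̃ = T_*((1-σ_N²)^{α/2} dμ)`. -/
def muTilde (n : ℕ) (μ : Measure (Euc (n + 1))) (α : ℝ) : Measure (Euc n) :=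
  Measure.map (Tproj n)
    (μ.withDensity fun σ => ENNReal.ofReal ((1 - (σ (Fin.last n)) ^ 2) ^ (α / 2)))




section Stmt8Aux

lemma meas_coordP {n : ℕ} (i : Fin (n+1)) : Measurable (fun σ : Euc (n+1) => σ i) :=
  (EuclideanSpace.proj i : Euc (n+1) →L[ℝ] ℝ).continuous.measurable

lemma meas_TprojP (n : ℕ) : Measurable (Tproj n) := by
  have h : Measurable (fun σ : Euc (n+1) =>
      (fun j : Fin n => σ j.castSucc / Real.sqrt (1 - (σ (Fin.last n)) ^ 2))) := by
    apply measurable_pi_lambda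
    intro j
    exact (meas_coordP j.castSucc).div
      (Real.continuous_sqrt.measurable.comp
        (measurable_const.sub ((meas_coordP (Fin.last n)).pow_const 2)))
  exact (EuclideanSpace.equiv (Fin n) ℝ).symm.toHomeomorph.measurable.comp h

lemma norm_sq_eq_sumP {n : ℕ} (x : Euc n) : ‖x‖^2 = ∑ i, x i ^ 2 := by
  rw [EuclideanSpace.norm_eq, Real.sq_sqrt (by positivity)]
  simp [sq_abs]

lemma sum_sq_eqP {n : ℕ} (σ : Euc (n+1)) (hσ : ‖σ‖ = 1) :
    1 - σ (Fin.last n) ^ 2 = ∑ j : Fin n, σ j.castSucc ^ 2 := by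
  have h := norm_sq_eq_sumP σ
  rw [hσ, Fin.sum_univ_castSucc] at h
  linarith

lemma c_nonnegP {n : ℕ} (σ : Euc (n+1)) (hσ : ‖σ‖ = 1) :
    0 ≤ 1 - σ (Fin.last n) ^ 2 := by
  rw [sum_sq_eqP σ hσ]; positivity

lemma c_eq_zeroP {n : ℕ} (σ : Euc (n+1)) (hσ : ‖σ‖ = 1)
    (h : ¬ |σ (Fin.last n)| < 1) : 1 - σ (Fin.last n) ^ 2 = 0 := by
  have hc0 := c_nonnegP σ hσ
  have h2 : 1 ≤ |σ (Fin.last n)| := not_lt.1 h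
  nlinarith [sq_abs (σ (Fin.last n))]

lemma dropE_eq_zeroP {n : ℕ} (σ : Euc (n+1)) (hσ : ‖σ‖ = 1)
    (h : 1 - σ (Fin.last n) ^ 2 = 0) : dropE σ = 0 := by
  have h2 := sum_sq_eqP σ hσ
  rw [h] at h2
  have h3 := (Finset.sum_eq_zero_iff_of_nonneg
    (fun j _ => sq_nonneg (σ j.castSucc))).1 h2.symm
  ext j
  have h4 := h3 j (Finset.mem_univ j)
  have h5 : σ j.castSucc = 0 := by nlinarith
  simpa [dropE] using h5

lemma inner_TprojP {n : ℕ} (ξ' : Euc n) (σ : Euc (n+1)) :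
    ⟪ξ', Tproj n σ⟫ = ⟪ξ', dropE σ⟫ / Real.sqrt (1 - σ (Fin.last n) ^ 2) := by
  simp only [PiLp.inner_apply, RCLike.inner_apply, starRingEnd_apply, star_trivial]
  rw [Finset.sum_div]
  exact Finset.sum_congr rfl fun j _ => by
    change σ j.castSucc / Real.sqrt (1 - σ (Fin.last n) ^ 2) * ξ' j
      = σ j.castSucc * ξ' j / Real.sqrt (1 - σ (Fin.last n) ^ 2)
    ring

lemma keyP {n : ℕ} {α : ℝ} (hα0 : 0 < α) (ξ' : Euc n) (σ : Euc (n+1)) (hσ : ‖σ‖ = 1) :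
    (1 - σ (Fin.last n) ^ 2) ^ (α/2) * |⟪ξ', Tproj n σ⟫| ^ α
      = |⟪ξ', dropE σ⟫| ^ α := by
  set c := 1 - σ (Fin.last n) ^ 2 with hc
  have hc0 : 0 ≤ c := c_nonnegP σ hσ
  rcases eq_or_lt_of_le hc0 with h0 | hpos
  · rw [← h0, Real.zero_rpow (by positivity : α/2 ≠ 0), zero_mul,
      dropE_eq_zeroP σ hσ h0.symm, inner_zero_right, abs_zero, Real.zero_rpow hα0.ne']
  · have hs : 0 < Real.sqrt c := Real.sqrt_pos.2 hpos
    rw [inner_TprojP, abs_div, abs_of_pos hs, Real.div_rpow (abs_nonneg _) hs.le]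
    have hcs : c ^ (α/2) = Real.sqrt c ^ α := by
      rw [Real.sqrt_eq_rpow, ← Real.rpow_mul hc0]
      ring_nf
    rw [hcs, mul_comm, div_mul_cancel₀ _ (Real.rpow_pos_of_pos hs α).ne']

lemma inner_snocE_zeroP {n : ℕ} (ξ' : Euc n) (σ : Euc (n+1)) :
    ⟪snocE ξ' 0, σ⟫ = ⟪ξ', dropE σ⟫ := by
  simp only [PiLp.inner_apply, RCLike.inner_apply, starRingEnd_apply, star_trivial]
  rw [Fin.sum_univ_castSucc]
  simp [snocE, dropE]

lemma snocE_mem_sphereP {n : ℕ} (ξ' : Euc n) (hξ : ‖ξ'‖ = 1) :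
    snocE ξ' 0 ∈ Metric.sphere (0 : Euc (n+1)) 1 := by
  rw [mem_sphere_zero_iff_norm]
  have h : ‖snocE ξ' 0‖ ^ 2 = 1 := by
    rw [EuclideanSpace.norm_eq, Real.sq_sqrt (by positivity)]
    have h2 : ‖ξ'‖ ^ 2 = 1 := by rw [hξ]; norm_num
    rw [EuclideanSpace.norm_eq, Real.sq_sqrt (by positivity)] at h2
    rw [Fin.sum_univ_castSucc]
    simp only [snocE]
    simpa [Fin.snoc_castSucc, Fin.snoc_last] using h2
  have := norm_nonneg (snocE ξ' 0)
  nlinarith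

end Stmt8Aux

/-- the projected measure `μ̃` is finite, with total mass
`∫ (1-σ_N²)^{α/2} dμ ≤ μ(S^{N-1})`, and satisfies the nondegeneracy condition with the
same constant `Λ₁`. (The paper's `N` is `n+1`, so `N ≥ 2` is `n ≥ 1`.) -/
theorem stmt_8 (n : ℕ) (hn : 1 ≤ n) (α lam1 lam2 : ℝ)
    (hα : α ∈ Ioo (0:ℝ) 2) (μ : Measure (Euc (n + 1))) (hμ : Anu μ α lam1 lam2) :
    (muTilde n μ α Set.univ
        = ∫⁻ σ, ENNReal.ofReal ((1 - (σ (Fin.last n)) ^ 2) ^ (α / 2)) ∂μ ∧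
      muTilde n μ α Set.univ ≤ μ Set.univ) ∧
    ∀ ξ' ∈ Metric.sphere (0 : Euc n) 1,
      (∫ σ', |⟪ξ', σ'⟫| ^ α ∂(muTilde n μ α))
          = ∫ σ in {σ : Euc (n + 1) | |σ (Fin.last n)| < 1}, |⟪ξ', dropE σ⟫| ^ α ∂μ ∧
        lam1 ≤ ∫ σ', |⟪ξ', σ'⟫| ^ α ∂(muTilde n μ α) := by
  obtain ⟨hμs, hμt, hlam1, hnd⟩ := hμ
  obtain ⟨hα0, hα2⟩ := hα
  have hae : ∀ᵐ σ ∂μ, ‖σ‖ = 1 := by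
    have h : ∀ᵐ σ ∂μ, σ ∈ Metric.sphere (0 : Euc (n+1)) 1 := mem_ae_iff.2 hμs
    exact h.mono fun σ hσ => mem_sphere_zero_iff_norm.1 hσ
  have hwmeas : Measurable (fun σ : Euc (n+1) => (1 - σ (Fin.last n) ^ 2) ^ (α/2)) := by
    have hcont : Continuous fun x : ℝ => x ^ (α/2) := by
      rw [continuous_iff_continuousAt]
      intro x
      exact Real.continuousAt_rpow_const x (α/2) (Or.inr (by positivity))
    exact hcont.measurable.comp
      (measurable_const.sub ((meas_coordP (Fin.last n)).pow_const 2))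
  have hsm : MeasurableSet {σ : Euc (n + 1) | |σ (Fin.last n)| < 1} :=
    measurableSet_lt (meas_coordP (Fin.last n)).abs measurable_const
  constructor
  · constructor
    · rw [muTilde, Measure.map_apply (meas_TprojP n) MeasurableSet.univ, preimage_univ,
        withDensity_apply _ MeasurableSet.univ, Measure.restrict_univ]
    · rw [muTilde, Measure.map_apply (meas_TprojP n) MeasurableSet.univ, preimage_univ,
        withDensity_apply _ MeasurableSet.univ, Measure.restrict_univ]
      calc ∫⁻ σ, ENNReal.ofReal ((1 - σ (Fin.last n) ^ 2) ^ (α/2)) ∂μ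
          ≤ ∫⁻ _, 1 ∂μ := by
            refine lintegral_mono_ae (hae.mono fun σ hσ => ?_)
            have hc0 := c_nonnegP σ hσ
            have hc1 : 1 - σ (Fin.last n) ^ 2 ≤ 1 := by nlinarith [sq_nonneg (σ (Fin.last n))]
            exact ENNReal.ofReal_le_one.2 (Real.rpow_le_one hc0 hc1 (by positivity))
        _ = μ Set.univ := lintegral_one
  · intro ξ' hξ'
    have hξn : ‖ξ'‖ = 1 := mem_sphere_zero_iff_norm.1 hξ'
    have hgc : Continuous fun σ' : Euc n => |⟪ξ', σ'⟫| ^ α :=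
      Continuous.rpow_const ((continuous_const.inner continuous_id).abs)
        (fun _ => Or.inr hα0.le)
    have e1 : (∫ σ', |⟪ξ', σ'⟫| ^ α ∂(muTilde n μ α))
        = ∫ σ, ({σ : Euc (n + 1) | |σ (Fin.last n)| < 1}.indicator
            (fun σ => |⟪ξ', dropE σ⟫| ^ α)) σ ∂μ := by
      rw [muTilde, integral_map (meas_TprojP n).aemeasurable hgc.aestronglyMeasurable,
        show (μ.withDensity fun σ => ENNReal.ofReal ((1 - σ (Fin.last n) ^ 2) ^ (α / 2)))
            = μ.withDensity
              (fun σ => ((Real.toNNReal ((1 - σ (Fin.last n) ^ 2) ^ (α / 2)) : NNReal) : ℝ≥0∞))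
          from rfl,
        integral_withDensity_eq_integral_smul
          (show Measurable (fun σ : Euc (n+1) => Real.toNNReal ((1 - σ (Fin.last n) ^ 2) ^ (α / 2)))
            from measurable_real_toNNReal.comp hwmeas)]
      refine integral_congr_ae (hae.mono fun σ hσ => ?_)
      have hc0 := c_nonnegP σ hσ
      have hkey := keyP hα0 ξ' σ hσ
      by_cases hlt : |σ (Fin.last n)| < 1
      · have hmem : σ ∈ {σ : Euc (n + 1) | |σ (Fin.last n)| < 1} := hlt
        simp only [Set.indicator_of_mem hmem, NNReal.smul_def, smul_eq_mul,
          Real.coe_toNNReal _ (Real.rpow_nonneg hc0 _)]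
        exact hkey
      · have hnotmem : σ ∉ {σ : Euc (n + 1) | |σ (Fin.last n)| < 1} := hlt
        simp only [Set.indicator_of_notMem hnotmem, c_eq_zeroP σ hσ hlt,
          Real.zero_rpow (show α/2 ≠ 0 by positivity), Real.toNNReal_zero, zero_smul]
    have e2 : (∫ σ', |⟪ξ', σ'⟫| ^ α ∂(muTilde n μ α))
        = ∫ σ in {σ : Euc (n + 1) | |σ (Fin.last n)| < 1}, |⟪ξ', dropE σ⟫| ^ α ∂μ := by
      rw [e1, integral_indicator hsm]
    refine ⟨e2, ?_⟩
    have e3 : (∫ σ, |⟪snocE ξ' 0, σ⟫| ^ α ∂μ)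
        = ∫ σ, ({σ : Euc (n + 1) | |σ (Fin.last n)| < 1}.indicator
            (fun σ => |⟪ξ', dropE σ⟫| ^ α)) σ ∂μ := by
      refine integral_congr_ae (hae.mono fun σ hσ => ?_)
      simp only [inner_snocE_zeroP]
      by_cases hlt : |σ (Fin.last n)| < 1
      · have hmem : σ ∈ {σ : Euc (n + 1) | |σ (Fin.last n)| < 1} := hlt
        simp only [Set.indicator_of_mem hmem]
      · have hnotmem : σ ∉ {σ : Euc (n + 1) | |σ (Fin.last n)| < 1} := hlt
        simp only [Set.indicator_of_notMem hnotmem]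
        rw [dropE_eq_zeroP σ hσ (c_eq_zeroP σ hσ hlt),
          inner_zero_right, abs_zero, Real.zero_rpow hα0.ne']
    calc lam1 ≤ ∫ σ, |⟪snocE ξ' 0, σ⟫| ^ α ∂μ := hnd (snocE ξ' 0) (snocE_mem_sphereP ξ' hξn)
      _ = _ := e3.trans e1.symm

end
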